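/- arXiv:2002.00062 — 13 statements merged into one kernel-verified Lean document; each statement's English description precedes it below -/
import Mathlib

section
/- Let n, k be positive integers with k ≤ 2^n and let a : Fin k → ℝ with a(i) > 0 for all i. Then there exist vectors v(1), …, v(k) in ℝ^n with ‖v(i)‖_∞ = 1 for every i, such that for all i ≠ j and all real numbers s, t ≥ 0 one has d_∞(t·v(i), s·v(j)) = t + s. Consequently the metric star tree with k leaves at distances a(1), …, a(k) from the center embeds isometrically into (ℝ^n, d_∞) via (i, t) ↦ t·v(i). -/
/-- A metric star tree with `k ≤ 2^n` leaves embeds isometrically into `(ℝ^n, d_∞)`: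
there are unit vectors `v i` (sup norm) such that `(i, t) ↦ t • v i` is an isometric
embedding of the star tree with arm lengths `a i`. -/
theorem star_tree_embeds_into_linf (n k : ℕ) (hn : 0 < n) (hk : 0 < k)
    (hkn : k ≤ 2 ^ n) (a : Fin k → ℝ) (ha : ∀ i, 0 < a i) :
    ∃ v : Fin k → (Fin n → ℝ),
      (∀ i, ‖v i‖ = 1) ∧
      (∀ i j : Fin k, i ≠ j → ∀ s t : ℝ, 0 ≤ s → 0 ≤ t →
        dist (t • v i) (s • v j) = t + s) ∧
      (∀ i : Fin k, ∀ s t : ℝ, dist (t • v i) (s • v i) = |t - s|) := by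
  have hcard : Fintype.card (Fin k) ≤ Fintype.card (Fin n → Bool) := by
    simp [hkn]
  obtain ⟨f⟩ := Function.Embedding.nonempty_of_card_le hcard
  set v : Fin k → (Fin n → ℝ) := fun i j => if f i j then (1 : ℝ) else -1 with hv
  have habs : ∀ i j, |v i j| = 1 := by
    intro i j
    by_cases h : f i j <;> simp [hv, h]
  have hnorm : ∀ i, ‖v i‖ = 1 := by
    intro i
    apply le_antisymm
    · apply pi_norm_le_iff_of_nonneg (by norm_num) |>.2
      intro j
      simp [Real.norm_eq_abs, habs i j]
    · have j : Fin n := ⟨0, hn⟩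
      calc (1 : ℝ) = ‖v i j‖ := by simp [Real.norm_eq_abs, habs i j]
        _ ≤ ‖v i‖ := norm_le_pi_norm _ j
  refine ⟨v, hnorm, ?_, ?_⟩
  · intro i j hij s t hs ht
    have hfij : f i ≠ f j := fun h => hij (f.injective h)
    obtain ⟨c, hc⟩ := Function.ne_iff.1 hfij
    apply le_antisymm
    · apply dist_pi_le_iff (by linarith) |>.2
      intro b
      have : dist (t * v i b) (s * v j b) ≤ t + s := by
        rw [Real.dist_eq]
        calc |t * v i b - s * v j b| ≤ |t * v i b| + |s * v j b| := abs_sub _ _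
          _ = t + s := by
            rw [abs_mul, abs_mul, habs, habs, abs_of_nonneg ht, abs_of_nonneg hs]; ring
      simpa using this
    · have h1 : dist (t * v i c) (s * v j c) ≤ dist (t • v i) (s • v j) := by
        simpa using dist_le_pi_dist (t • v i) (s • v j) c
      have h2 : dist (t * v i c) (s * v j c) = t + s := by
        rw [Real.dist_eq]
        cases hb : f i c <;> cases hb' : f j c
        · exact absurd (hb.trans hb'.symm) hc
        · simp only [hv, hb, hb']
          norm_num
          first
          | linarith
          | (rw [abs_of_nonpos (by linarith)]; ring)
          | rw [abs_of_nonneg (by linarith)]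
        · simp only [hv, hb, hb']
          norm_num
          first
          | linarith
          | (rw [abs_of_nonpos (by linarith)]; ring)
          | rw [abs_of_nonneg (by linarith)]
        · exact absurd (hb.trans hb'.symm) hc
      linarith
  · intro i s t
    have : t • v i - s • v i = (t - s) • v i := by module
    rw [dist_eq_norm, this, norm_smul, hnorm, Real.norm_eq_abs, mul_one]
end

section
/- Let n, k be positive integers, a : Fin k → ℝ with a(i) > 0 for all i, and A : Fin k → ℝ^n points such that ‖A(i)‖_∞ = a(i) for every i and d_∞(A(i), A(j)) = a(i) + a(j) for all i ≠ j. Then k ≤ 2^n. (In particular, a metric star tree with more than 2^n leaves cannot be isometrically embedded into (ℝ^n, d_∞).) -/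
/-- If `A i` are points of `(ℝ^n, d_∞)` with `‖A i‖_∞ = a i > 0` and
`d_∞(A i, A j) = a i + a j` for `i ≠ j` (the images of the leaves of a star tree
under an isometric embedding sending the center to the origin), then `k ≤ 2^n`. -/
theorem star_tree_leaves_le_pow_of_embed_linf (n k : ℕ) (hn : 0 < n) (hk : 0 < k)
    (a : Fin k → ℝ) (ha : ∀ i, 0 < a i) (A : Fin k → (Fin n → ℝ))
    (hnorm : ∀ i, ‖A i‖ = a i)
    (hdist : ∀ i j : Fin k, i ≠ j → dist (A i) (A j) = a i + a j) :
    k ≤ 2 ^ n := by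
  classical
  have key : ∀ i j : Fin k, i ≠ j → ¬ (∀ t : Fin n, (0 < A i t) ↔ (0 < A j t)) := by
    intro i j hij h
    have hd : dist (A i) (A j) < a i + a j := by
      rw [dist_pi_lt_iff (by have := ha i; have := ha j; linarith)]
      intro t
      have h1 : |A i t| ≤ a i := by
        simpa [Real.norm_eq_abs, hnorm i] using norm_le_pi_norm (A i) t
      have h2 : |A j t| ≤ a j := by
        simpa [Real.norm_eq_abs, hnorm j] using norm_le_pi_norm (A j) t
      have h1' := abs_le.mp h1
      have h2' := abs_le.mp h2
      rw [Real.dist_eq, abs_sub_lt_iff]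
      rcases le_or_gt (A i t) 0 with hx | hx
      · have hy : A j t ≤ 0 := by
          by_contra hy
          push_neg at hy
          exact absurd ((h t).mpr hy) (not_lt.mpr hx)
        constructor <;> [nlinarith [ha i, ha j]; nlinarith [ha i, ha j]]
      · have hy : 0 < A j t := (h t).mp hx
        constructor <;> [nlinarith [ha i, ha j]; nlinarith [ha i, ha j]]
    rw [hdist i j hij] at hd
    exact lt_irrefl _ hd
  have inj : Function.Injective (fun i : Fin k => fun t : Fin n => decide (0 < A i t)) := by
    intro i j hij
    by_contra hne
    apply key i j hne
    intro t
    have := congrFun hij t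
    simpa [decide_eq_decide] using this
  have := Fintype.card_le_of_injective _ inj
  simpa [Fintype.card_fun] using this
end

section
/- Let n, k be positive integers with k ≤ 2n and let a : Fin k → ℝ with a(i) > 0 for all i. Then there exist vectors v(1), …, v(k) in ℝ^n with ‖v(i)‖_1 = 1 for every i, such that for all i ≠ j and all real numbers s, t ≥ 0 one has d_1(t·v(i), s·v(j)) = t + s. Consequently the metric star tree with k leaves at distances a(1), …, a(k) from the center embeds isometrically into (ℝ^n, d_1) via (i, t) ↦ t·v(i). -/
/-! Send the leaves `2m` and `2m + 1` to `e_m` and `-e_m`. Any two of these unit vectors have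
coordinatewise products `≤ 0`, and for such a pair the `ℓ¹` norm is additive along their
difference, `‖x - y‖₁ = ‖x‖₁ + ‖y‖₁`; this is exactly the star-tree distance `t + s`. -/

theorem abs_sub_eq_abs_add_abs_of_mul_nonpos {α : Type*} [Ring α] [LinearOrder α]
    [IsStrictOrderedRing α] {a b : α} (h : a * b ≤ 0) :
    |a - b| = |a| + |b| := by
  rcases mul_nonpos_iff.mp h with ⟨ha, hb⟩ | ⟨ha, hb⟩
  · rw [abs_of_nonneg ha, abs_of_nonpos hb, abs_of_nonneg (sub_nonneg.mpr (hb.trans ha))]; abel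
  · rw [abs_of_nonpos ha, abs_of_nonneg hb, abs_of_nonpos (sub_nonpos.mpr (ha.trans hb))]; abel

theorem PiLp.norm_sub_eq_norm_add_norm_of_mul_nonpos {ι : Type*} [Fintype ι]
    {x y : PiLp 1 (fun _ : ι => ℝ)} (h : ∀ m, x m * y m ≤ 0) :
    ‖x - y‖ = ‖x‖ + ‖y‖ := by
  simp only [PiLp.norm_eq_of_L1, PiLp.sub_apply, Real.norm_eq_abs, ← Finset.sum_add_distrib,
    abs_sub_eq_abs_add_abs_of_mul_nonpos (h _)]

section SignedBasis

variable {n k : ℕ}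

noncomputable def signedBasis (hkn : k ≤ 2 * n) (i : Fin k) : PiLp 1 (fun _ : Fin n => ℝ) :=
  PiLp.single 1 ⟨i / 2, by omega⟩ ((-1) ^ (i : ℕ))

theorem norm_signedBasis (hkn : k ≤ 2 * n) (i : Fin k) : ‖signedBasis hkn i‖ = 1 := by
  simp [signedBasis, PiLp.norm_single]

theorem signedBasis_mul_signedBasis_nonpos (hkn : k ≤ 2 * n) {i j : Fin k} (hij : i ≠ j)
    (m : Fin n) : signedBasis hkn i m * signedBasis hkn j m ≤ 0 := by
  have hij' : (i : ℕ) ≠ j := Fin.val_ne_of_ne hij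
  simp only [signedBasis, PiLp.single_apply, Fin.ext_iff]
  split_ifs with hi hj
  · have hparity : (i : ℕ) + j = 2 * (2 * (i / 2)) + 1 := by omega
    rw [← pow_add, hparity, pow_succ, pow_mul]
    norm_num
  all_goals simp

end SignedBasis

theorem star_tree_embeds_into_l1_general (n k : ℕ)
    (hkn : k ≤ 2 * n) :
    ∃ v : Fin k → PiLp 1 (fun _ : Fin n => ℝ),
      (∀ i, ‖v i‖ = 1) ∧
      (∀ i j : Fin k, i ≠ j → ∀ s t : ℝ, 0 ≤ s → 0 ≤ t →
        dist (t • v i) (s • v j) = t + s) ∧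
      (∀ i : Fin k, ∀ s t : ℝ, dist (t • v i) (s • v i) = |t - s|) := by
  refine ⟨signedBasis hkn, norm_signedBasis hkn, fun i j hij s t hs ht => ?_, fun i s t => ?_⟩
  · have hprod (m : Fin n) : (t • signedBasis hkn i) m * (s • signedBasis hkn j) m ≤ 0 := by
      simpa only [PiLp.smul_apply, smul_eq_mul, mul_mul_mul_comm]
        using mul_nonpos_of_nonneg_of_nonpos (mul_nonneg ht hs)
          (signedBasis_mul_signedBasis_nonpos hkn hij m)
    rw [dist_eq_norm, PiLp.norm_sub_eq_norm_add_norm_of_mul_nonpos hprod, norm_smul, norm_smul,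
      norm_signedBasis, norm_signedBasis, Real.norm_of_nonneg ht, Real.norm_of_nonneg hs,
      mul_one, mul_one]
  · rw [dist_eq_norm, ← sub_smul, norm_smul, norm_signedBasis, mul_one, Real.norm_eq_abs]

/-- A metric star tree with `k ≤ 2n` leaves embeds isometrically into `(ℝ^n, d_1)`:
there are unit vectors `v i` (ℓ¹ norm) such that `(i, t) ↦ t • v i` is an isometric
embedding of the star tree with arm lengths `a i`. -/
theorem star_tree_embeds_into_l1 (n k : ℕ) (hn : 0 < n) (hk : 0 < k)
    (hkn : k ≤ 2 * n) (a : Fin k → ℝ) (ha : ∀ i, 0 < a i) :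
    ∃ v : Fin k → PiLp 1 (fun _ : Fin n => ℝ),
      (∀ i, ‖v i‖ = 1) ∧
      (∀ i j : Fin k, i ≠ j → ∀ s t : ℝ, 0 ≤ s → 0 ≤ t →
        dist (t • v i) (s • v j) = t + s) ∧
      (∀ i : Fin k, ∀ s t : ℝ, dist (t • v i) (s • v i) = |t - s|) :=
  star_tree_embeds_into_l1_general n k hkn
end

section
/- Let n, k be positive integers, a : Fin k → ℝ with a(i) > 0 for all i, and A : Fin k → ℝ^n points such that ‖A(i)‖_1 = a(i) for every i and d_1(A(i), A(j)) = a(i) + a(j) for all i ≠ j. Then k ≤ 2n. (In particular, a metric star tree with more than 2n leaves cannot be isometrically embedded into (ℝ^n, d_1).) -/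
/-!
Equality `d₁(x, y) = ‖x‖₁ + ‖y‖₁` in the triangle inequality through the origin forces
equality in every coordinate, i.e. `x c * y c ≤ 0` for each `c`: two leaves never share a
strict sign in any coordinate. Choosing for each leaf a coordinate where it is nonzero,
together with the sign there, therefore gives an injection of the leaves into
`Fin n × Bool`.
-/

open Finset

theorem abs_sub_eq_abs_add_abs_iff {R : Type*} [Ring R] [LinearOrder R] [IsStrictOrderedRing R]
    (x y : R) : |x - y| = |x| + |y| ↔ x * y ≤ 0 := by
  rw [sub_eq_add_neg, ← abs_neg y, abs_add_eq_add_abs_iff, mul_nonpos_iff, neg_nonneg,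
    neg_nonpos]

theorem PiLp.dist_eq_norm_add_norm_apply {ι : Type*} [Fintype ι] {β : ι → Type*}
    [∀ c, SeminormedAddCommGroup (β c)] {x y : PiLp 1 β} (h : dist x y = ‖x‖ + ‖y‖) (c : ι) :
    dist (x c) (y c) = ‖x c‖ + ‖y c‖ := by
  rw [PiLp.dist_eq_of_L1, PiLp.norm_eq_of_L1, PiLp.norm_eq_of_L1, ← sum_add_distrib,
    sum_eq_sum_iff_of_le fun c _ => dist_le_norm_add_norm _ _] at h
  exact h c (mem_univ c)

theorem mul_pos_of_ne_zero_of_pos_iff_pos {R : Type*} [Ring R] [LinearOrder R]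
    [IsStrictOrderedRing R] {x y : R} (hx : x ≠ 0) (hy : y ≠ 0)
    (h : 0 < x ↔ 0 < y) : 0 < x * y := by
  rcases hx.lt_or_gt with hx | hx
  · exact mul_pos_of_neg_of_neg hx (hy.lt_of_le (not_lt.1 (h.not.1 hx.not_gt)))
  · exact mul_pos hx (h.1 hx)

theorem card_le_two_mul_of_pairwise_mul_nonpos {κ ι R : Type*} [Fintype κ] [Fintype ι]
    [Ring R] [LinearOrder R] [IsStrictOrderedRing R] (v : κ → ι → R) (hv : ∀ i, v i ≠ 0) (hsep : Pairwise fun i j => ∀ c, v i c * v j c ≤ 0) :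
    Fintype.card κ ≤ 2 * Fintype.card ι := by
  choose c hc using fun i => Function.ne_iff.1 (hv i)
  have hinj : Function.Injective fun i => (c i, decide (0 < v i (c i))) := by
    intro i j hij
    simp only [Prod.mk.injEq, decide_eq_decide] at hij
    obtain ⟨hcij, hsign⟩ := hij
    by_contra hne
    refine (hsep hne (c i)).not_gt (mul_pos_of_ne_zero_of_pos_iff_pos (hc i) ?_ ?_)
    · exact hcij ▸ hc j
    · rwa [hcij] at hsign ⊢
  simpa [Fintype.card_prod, mul_comm] using Fintype.card_le_of_injective _ hinj

theorem star_tree_leaves_le_two_mul_of_embed_l1_general (n k : ℕ)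
    (a : Fin k → ℝ) (ha : ∀ i, 0 < a i) (A : Fin k → PiLp 1 (fun _ : Fin n => ℝ))
    (hnorm : ∀ i, ‖A i‖ = a i)
    (hdist : ∀ i j : Fin k, i ≠ j → dist (A i) (A j) = a i + a j) :
    k ≤ 2 * n := by
  have hA : ∀ i, WithLp.ofLp (A i) ≠ 0 := fun i => by
    simpa [← norm_pos_iff, hnorm] using ha i
  have hsep : Pairwise fun i j => ∀ c, A i c * A j c ≤ 0 := fun i j hij c => by
    rw [← abs_sub_eq_abs_add_abs_iff, ← Real.dist_eq, ← Real.norm_eq_abs, ← Real.norm_eq_abs]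
    exact PiLp.dist_eq_norm_add_norm_apply (by rw [hdist i j hij, hnorm, hnorm]) c
  simpa using card_le_two_mul_of_pairwise_mul_nonpos _ hA hsep

/-- If `A i` are points of `(ℝ^n, d_1)` with `‖A i‖_1 = a i > 0` and
`d_1(A i, A j) = a i + a j` for `i ≠ j` (the images of the leaves of a star tree
under an isometric embedding sending the center to the origin), then `k ≤ 2n`. -/
theorem star_tree_leaves_le_two_mul_of_embed_l1 (n k : ℕ) (hn : 0 < n) (hk : 0 < k)
    (a : Fin k → ℝ) (ha : ∀ i, 0 < a i) (A : Fin k → PiLp 1 (fun _ : Fin n => ℝ))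
    (hnorm : ∀ i, ‖A i‖ = a i)
    (hdist : ∀ i j : Fin k, i ≠ j → dist (A i) (A j) = a i + a j) :
    k ≤ 2 * n :=
  star_tree_leaves_le_two_mul_of_embed_l1_general n k a ha A hnorm hdist
end

section
/- Let p, q ∈ ℝ^n with p ≠ q, set b = d_∞(p, q), and suppose q ∈ S_i^+(p), i.e. b = q_i − p_i for some coordinate i. Let α : [0, b] → ℝ^n be a map with α(0) = p and α(b) = q which is 1-Lipschitz with respect to d_∞. Then α is a geodesic (i.e. d_∞(α(s), α(t)) = |s − t| for all s, t ∈ [0, b]) if and only if for all s, t ∈ [0, b] with s ≤ t one has d_∞(α(s), α(t)) = α(t)_i − α(s)_i (i.e. α(t) ∈ S_i^+(α(s))). -/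
lemma coord_le_dist (n : ℕ) (f g : Fin n → ℝ) (i : Fin n) :
    f i - g i ≤ dist g f := by
  have h := dist_le_pi_dist g f i
  rw [Real.dist_eq] at h
  have := neg_abs_le (g i - f i)
  linarith

/-- Characterization of geodesics in `(ℝ^n, d_∞)`: let `q ∈ S_i^+(p)`, `p ≠ q`,
`b = d_∞(p,q)`, and let `α : [0,b] → ℝ^n` be `1`-Lipschitz with `α 0 = p`,
`α b = q`. Then `α` is a geodesic iff `α t ∈ S_i^+(α s)` for all `0 ≤ s ≤ t ≤ b`. -/
theorem geodesic_iff_sector (n : ℕ) (p q : Fin n → ℝ) (hpq : p ≠ q)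
    (i : Fin n) (b : ℝ) (hb : b = dist p q) (hsec : dist p q = q i - p i)
    (α : ℝ → (Fin n → ℝ)) (h0 : α 0 = p) (hbq : α b = q)
    (hlip : ∀ s t : ℝ, s ∈ Set.Icc 0 b → t ∈ Set.Icc 0 b →
      dist (α s) (α t) ≤ |s - t|) :
    (∀ s t : ℝ, s ∈ Set.Icc 0 b → t ∈ Set.Icc 0 b → dist (α s) (α t) = |s - t|)
      ↔
    (∀ s t : ℝ, s ∈ Set.Icc 0 b → t ∈ Set.Icc 0 b → s ≤ t →
      dist (α s) (α t) = α t i - α s i) := by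
  have hb0 : 0 ≤ b := hb ▸ dist_nonneg
  have h0mem : (0 : ℝ) ∈ Set.Icc (0 : ℝ) b := ⟨le_refl _, hb0⟩
  have hbmem : b ∈ Set.Icc (0 : ℝ) b := ⟨hb0, le_refl _⟩
  constructor
  · intro hgeo s t hs ht hst
    -- upper bound for coordinate
    have h1 : α t i - α s i ≤ dist (α s) (α t) := coord_le_dist n (α t) (α s) i
    -- geodesic values
    have hst' : dist (α s) (α t) = t - s := by
      rw [hgeo s t hs ht, abs_of_nonpos (by linarith)]; ring
    have htb : dist (α t) (α b) = b - t := by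
      rw [hgeo t b ht hbmem, abs_of_nonpos (by linarith [ht.2])]; ring
    have h0s : dist (α 0) (α s) = s := by
      rw [hgeo 0 s h0mem hs, abs_of_nonpos (by linarith [hs.1])]
      simp
    have h2 : α b i - α t i ≤ dist (α t) (α b) := coord_le_dist n (α b) (α t) i
    have h3 : α s i - α 0 i ≤ dist (α 0) (α s) := coord_le_dist n (α s) (α 0) i
    have hqi : α b i - α 0 i = b := by rw [h0, hbq, hb, hsec]
    rw [hst']
    -- b = (α b i - α t i) + (α t i - α s i) + (α s i - α 0 i)
    have : t - s ≤ α t i - α s i := by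
      have := htb ▸ h2
      have := h0s ▸ h3
      linarith
    linarith [hst' ▸ h1]
  · intro hsect s t hs ht
    -- suffices for s ≤ t
    have key : ∀ s t : ℝ, s ∈ Set.Icc 0 b → t ∈ Set.Icc 0 b → s ≤ t →
        dist (α s) (α t) = t - s := by
      intro s t hs ht hst
      have h1 := hsect s t hs ht hst
      have h2 := hsect 0 s h0mem hs hs.1
      have h3 := hsect t b ht hbmem ht.2
      have hqi : α b i - α 0 i = b := by rw [h0, hbq, hb, hsec]
      have hd2 : dist (α 0) (α s) ≤ s := by
        have := hlip 0 s h0mem hs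
        rw [abs_of_nonpos (by linarith [hs.1])] at this; linarith
      have hd3 : dist (α t) (α b) ≤ b - t := by
        have := hlip t b ht hbmem
        rw [abs_of_nonpos (by linarith [ht.2])] at this; linarith
      have hub : dist (α s) (α t) ≤ t - s := by
        have := hlip s t hs ht
        rw [abs_of_nonpos (by linarith)] at this; linarith
      -- lower bound
      have hlb : t - s ≤ dist (α s) (α t) := by
        rw [h1]; linarith [h2 ▸ hd2, h3 ▸ hd3]
      linarith
    rcases le_total s t with h | h
    · rw [key s t hs ht h, abs_of_nonpos (by linarith)]; ring
    · rw [dist_comm, key t s ht hs h, abs_of_nonneg (by linarith)]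
end

section
/- Shortening Lemma: Let α : [0, b] → ℝ^n be a geodesic with respect to d_∞ and let 0 < c < d < b. Define α̃ : [0, b − d + c] → ℝ^n by α̃(t) = α(t) for t ∈ [0, c] and α̃(t) = α(t − c + d) − α(d) + α(c) for t ∈ [c, b − d + c]. Then α̃ is a geodesic, i.e. d_∞(α̃(s), α̃(t)) = |s − t| for all s, t ∈ [0, b − d + c]. -/
private lemma shortening_aux (n : ℕ) (b c d : ℝ) (hc : 0 < c) (hcd : c < d) (hdb : d < b)
    (α : ℝ → (Fin n → ℝ))
    (hgeo : ∀ s t : ℝ, s ∈ Set.Icc 0 b → t ∈ Set.Icc 0 b →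
      dist (α s) (α t) = |s - t|)
    (s t : ℝ) (hs0 : 0 ≤ s) (hsc : s ≤ c) (htc : c < t) (htb : t ≤ b - d + c) :
    dist (α s) (α (t - c + d) - α d + α c) = t - s := by
  have hs' : s ∈ Set.Icc (0:ℝ) b := ⟨hs0, by linarith⟩
  have hc' : c ∈ Set.Icc (0:ℝ) b := ⟨by linarith, by linarith⟩
  have hd' : d ∈ Set.Icc (0:ℝ) b := ⟨by linarith, by linarith⟩
  have ht' : t - c + d ∈ Set.Icc (0:ℝ) b := ⟨by linarith, by linarith⟩
  have h1 : dist (α s) (α (t - c + d)) = t - c + d - s := by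
    rw [hgeo _ _ hs' ht', abs_of_nonpos (by linarith)]; ring
  have h2 : dist (α s) (α c) = c - s := by
    rw [hgeo _ _ hs' hc', abs_of_nonpos (by linarith)]; ring
  have h3 : dist (α c) (α (t - c + d) - α d + α c) = t - c := by
    have e : dist (α c) (α (t - c + d) - α d + α c) = dist (α d) (α (t - c + d)) := by
      rw [dist_eq_norm, dist_eq_norm]; congr 1; abel
    rw [e, hgeo _ _ hd' ht', abs_of_nonpos (by linarith)]; ring
  have h4 : dist (α (t - c + d) - α d + α c) (α (t - c + d)) = d - c := by
    have e : dist (α (t - c + d) - α d + α c) (α (t - c + d)) = dist (α c) (α d) := by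
      rw [dist_eq_norm, dist_eq_norm]; congr 1; abel
    rw [e, hgeo _ _ hc' hd', abs_of_nonpos (by linarith)]; ring
  have hub := dist_triangle (α s) (α c) (α (t - c + d) - α d + α c)
  have hlb := dist_triangle (α s) (α (t - c + d) - α d + α c) (α (t - c + d))
  linarith

/-- Shortening Lemma: if `α : [0,b] → (ℝ^n, d_∞)` is a geodesic and `0 < c < d < b`,
then the shortened curve `α̃` (following `α` on `[0,c]` and then the translated
piece `α (· - c + d) - α d + α c`) is a geodesic on `[0, b - d + c]`. -/
theorem shortening_lemma (n : ℕ) (b c d : ℝ) (hc : 0 < c) (hcd : c < d) (hdb : d < b)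
    (α : ℝ → (Fin n → ℝ))
    (hgeo : ∀ s t : ℝ, s ∈ Set.Icc 0 b → t ∈ Set.Icc 0 b →
      dist (α s) (α t) = |s - t|) :
    ∀ s t : ℝ, s ∈ Set.Icc 0 (b - d + c) → t ∈ Set.Icc 0 (b - d + c) →
      dist ((fun u => if u ≤ c then α u else α (u - c + d) - α d + α c) s)
           ((fun u => if u ≤ c then α u else α (u - c + d) - α d + α c) t)
        = |s - t| := by
  intro s t hs ht
  simp only []
  by_cases hsc : s ≤ c <;> by_cases htc : t ≤ c <;>
    simp only [if_pos, if_neg, hsc, htc, if_true, if_false]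
  · exact hgeo s t ⟨hs.1, by linarith⟩ ⟨ht.1, by linarith⟩
  · rw [shortening_aux n b c d hc hcd hdb α hgeo s t hs.1 hsc (lt_of_not_ge htc) ht.2,
      abs_of_nonpos (by push_neg at htc; linarith)]; ring
  · rw [dist_comm,
      shortening_aux n b c d hc hcd hdb α hgeo t s ht.1 htc (lt_of_not_ge hsc) hs.2,
      abs_of_nonneg (by push_neg at hsc; linarith)]
  · push_neg at hsc htc
    have hs' : s - c + d ∈ Set.Icc (0:ℝ) b := ⟨by linarith, by linarith [hs.2]⟩
    have ht' : t - c + d ∈ Set.Icc (0:ℝ) b := ⟨by linarith, by linarith [ht.2]⟩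
    have e : dist (α (s - c + d) - α d + α c) (α (t - c + d) - α d + α c)
        = dist (α (s - c + d)) (α (t - c + d)) := by
      rw [dist_eq_norm, dist_eq_norm]; congr 1; abel
    rw [e, hgeo _ _ hs' ht']
    congr 1; ring
end

section
/- Let A, B, C, D ∈ ℝ^n satisfy ‖A − D‖_∞ = ‖A − B‖_∞ + ‖B − C‖_∞ + ‖C − D‖_∞, with A ≠ B and C ≠ D. Then for every real number t > 0, one has B − A ≠ t·(C − D). (Applied to the images A_i, B_i, B_j, A_j of two leaves and their adjacent vertices under an isometric embedding of a tree, this says the vectors A_i − B_i and A_j − B_j are never positive multiples of each other.) -/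
/-- If `A → B → C → D` is a geodesic configuration in `(ℝ^n, d_∞)` (the triangle
inequality is an equality along the chain) with `A ≠ B` and `C ≠ D`, then `B - A`
is not a positive multiple of `C - D`. -/
theorem not_pos_multiple_of_geodesic_chain (n : ℕ) (A B C D : Fin n → ℝ)
    (hchain : ‖A - D‖ = ‖A - B‖ + ‖B - C‖ + ‖C - D‖)
    (hAB : A ≠ B) (hCD : C ≠ D) :
    ∀ t : ℝ, 0 < t → B - A ≠ t • (C - D) := by
  intro t ht heq
  have hABn : 0 < ‖A - B‖ := by
    rw [norm_pos_iff]; exact sub_ne_zero_of_ne hAB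
  have hCDn : 0 < ‖C - D‖ := by
    rw [norm_pos_iff]; exact sub_ne_zero_of_ne hCD
  -- n ≠ 0
  have hne : Nonempty (Fin n) := by
    rcases Nat.eq_zero_or_pos n with h0 | h0
    · exfalso; apply hAB; funext i; exact absurd (h0 ▸ i).isLt (by simp)
    · exact ⟨⟨0, h0⟩⟩
  -- coordinate attaining ‖A - D‖
  obtain ⟨i, _, hi⟩ := Finset.exists_mem_eq_sup (Finset.univ : Finset (Fin n))
    (Finset.univ_nonempty) (fun j => ‖(A - D) j‖₊)
  have hiAD : ‖A - D‖ = |(A - D) i| := by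
    rw [Pi.norm_def, hi]; simp [Real.norm_eq_abs]
  have h1 : |(A - B) i| ≤ ‖A - B‖ := norm_le_pi_norm (A - B) i
  have h2 : |(B - C) i| ≤ ‖B - C‖ := norm_le_pi_norm (B - C) i
  have h3 : |(C - D) i| ≤ ‖C - D‖ := norm_le_pi_norm (C - D) i
  set x := (A - B) i
  set y := (B - C) i
  set z := (C - D) i
  have hsum : (A - D) i = x + y + z := by
    simp only [x, y, z, Pi.sub_apply]; ring
  have hle : ‖A - D‖ ≤ |x| + |y| + |z| := by
    rw [hiAD, hsum]
    exact (abs_add_le _ _).trans (by gcongr; exact abs_add_le _ _)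
  -- hence each is equality
  have hx : |x| = ‖A - B‖ := by linarith [hchain ▸ hle]
  have hz : |z| = ‖C - D‖ := by linarith [hchain ▸ hle]
  have hxz : x = -t * z := by
    have h := congrFun heq i
    simp only [Pi.sub_apply, Pi.smul_apply, smul_eq_mul] at h
    simp only [x, z, Pi.sub_apply]
    linear_combination -h
  have hzne : z ≠ 0 := by
    intro h; rw [h, abs_zero] at hz; linarith
  -- contradiction
  have key : |x + y + z| ≤ |y| + |1 - t| * |z| := by
    have : x + y + z = y + (1 - t) * z := by rw [hxz]; ring
    rw [this]
    exact (abs_add_le _ _).trans (by rw [abs_mul])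
  have h1t : |1 - t| < 1 + t := by
    rcases abs_cases (1 - t) with ⟨h, _⟩ | ⟨h, _⟩ <;> linarith
  have hxt : |x| = t * |z| := by rw [hxz, abs_mul, abs_neg, abs_of_pos ht]
  have hzpos : 0 < |z| := abs_pos.mpr hzne
  have : ‖A - D‖ < ‖A - B‖ + ‖B - C‖ + ‖C - D‖ := by
    calc ‖A - D‖ = |x + y + z| := by rw [hiAD, hsum]
    _ ≤ |y| + |1 - t| * |z| := key
    _ < |y| + (1 + t) * |z| := by gcongr
    _ = |x| + |y| + |z| := by rw [hxt]; ring
    _ ≤ ‖A - B‖ + ‖B - C‖ + ‖C - D‖ := by rw [hx, hz]; gcongr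
  linarith
end

section
/- Let A, B, C, D ∈ ℝ^n satisfy ‖A − D‖_∞ = ‖A − B‖_∞ + ‖B − C‖_∞ + ‖C − D‖_∞. Then ‖(A − B) − (D − C)‖_∞ = ‖A − B‖_∞ + ‖D − C‖_∞. (Geometrically: shortening the middle segment of the geodesic A → B → C → D to zero, the directions A − B and D − C emanating from a common point still form a geodesic pair.) -/
/-- If `A → B → C → D` is a geodesic configuration in `(ℝ^n, d_∞)`, then shortening
the middle segment to zero keeps the endpoints geodesically aligned:
`‖(A - B) - (D - C)‖_∞ = ‖A - B‖_∞ + ‖D - C‖_∞`. -/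
theorem shortened_chain_linf (n : ℕ) (A B C D : Fin n → ℝ)
    (hchain : ‖A - D‖ = ‖A - B‖ + ‖B - C‖ + ‖C - D‖) :
    ‖(A - B) - (D - C)‖ = ‖A - B‖ + ‖D - C‖ := by
  have e : A - D = ((A - B) - (D - C)) + (B - C) := by abel
  have h1 : ‖A - D‖ ≤ ‖(A - B) - (D - C)‖ + ‖B - C‖ := by
    rw [e]; exact norm_add_le _ _
  have h2 : ‖(A - B) - (D - C)‖ ≤ ‖A - B‖ + ‖D - C‖ := norm_sub_le _ _
  have h3 : ‖C - D‖ = ‖D - C‖ := norm_sub_rev _ _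
  linarith
end

section
/- Let n, k be positive integers and let A, B : Fin k → ℝ^n be points such that A(i) ≠ B(i) for every i, and for all i ≠ j: ‖A(i) − A(j)‖_∞ = ‖A(i) − B(i)‖_∞ + ‖B(i) − B(j)‖_∞ + ‖B(j) − A(j)‖_∞. Then k ≤ 2^n. -/
lemma exists_abs_eq_norm {n : ℕ} (hn : 0 < n) (x : Fin n → ℝ) :
    ∃ m, |x m| = ‖x‖ := by
  haveI : Nonempty (Fin n) := ⟨⟨0, hn⟩⟩
  obtain ⟨m, -, hm⟩ := Finset.exists_mem_eq_sup' (Finset.univ_nonempty (α := Fin n))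
    (fun i => ‖x i‖₊)
  refine ⟨m, ?_⟩
  have : ‖x‖ = ((Finset.univ.sup fun i => ‖x i‖₊ : NNReal) : ℝ) := by
    rw [Pi.norm_def]
  rw [this, ← Finset.sup'_eq_sup (Finset.univ_nonempty (α := Fin n)), hm]
  simp [Real.norm_eq_abs]

/-- If `A i, B i` in `(ℝ^n, d_∞)` are images of the leaves of a tree and of their
adjacent vertices under an isometric embedding, i.e. `A i ≠ B i` and for `i ≠ j`
the chain `A i → B i → B j → A j` is geodesic, then `k ≤ 2^n`. -/
theorem leaves_le_pow_linf (n k : ℕ) (hn : 0 < n) (hk : 0 < k)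
    (A B : Fin k → (Fin n → ℝ)) (hAB : ∀ i, A i ≠ B i)
    (hchain : ∀ i j : Fin k, i ≠ j →
      ‖A i - A j‖ = ‖A i - B i‖ + ‖B i - B j‖ + ‖B j - A j‖) :
    k ≤ 2 ^ n := by
  have hd : ∀ i, 0 < ‖A i - B i‖ := fun i =>
    norm_pos_iff.mpr (sub_ne_zero.mpr (hAB i))
  set f : Fin k → (Fin n → Bool) := fun i m => decide ((A i - B i) m = ‖A i - B i‖)
  have hinj : Function.Injective f := by
    intro i j hij
    by_contra hne
    obtain ⟨m, hm⟩ := exists_abs_eq_norm hn (A i - A j)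
    have ha : |(A i - B i) m| ≤ ‖A i - B i‖ := norm_le_pi_norm (A i - B i) m
    have hb : |(B i - B j) m| ≤ ‖B i - B j‖ := norm_le_pi_norm (B i - B j) m
    have hc : |(B j - A j) m| ≤ ‖B j - A j‖ := norm_le_pi_norm (B j - A j) m
    have hsum : (A i - B i) m + (B i - B j) m + (B j - A j) m = (A i - A j) m := by
      simp [Pi.sub_apply]
    have hchain' := hchain i j hne
    rw [hchain'] at hm
    have ha' := abs_le.mp ha
    have hb' := abs_le.mp hb
    have hc' := abs_le.mp hc
    have hfij : f i m = f j m := by rw [hij]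
    rcases abs_eq (by positivity : (0:ℝ) ≤ ‖A i - B i‖ + ‖B i - B j‖ + ‖B j - A j‖)
      |>.mp hm with h | h
    · have h1 : (A i - B i) m = ‖A i - B i‖ := by linarith [ha'.1, ha'.2, hb'.1, hb'.2, hc'.1, hc'.2]
      have h2 : (B j - A j) m = ‖B j - A j‖ := by linarith [ha'.1, ha'.2, hb'.1, hb'.2, hc'.1, hc'.2]
      have h3 : (A j - B j) m = -‖B j - A j‖ := by
        have : (A j - B j) m = -((B j - A j) m) := by simp [Pi.sub_apply]
        rw [this, h2]
      have h4 : (A j - B j) m ≠ ‖A j - B j‖ := by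
        rw [h3, norm_sub_rev (B j)]
        have := hd j
        intro hcon; linarith
      simp only [f, decide_eq_decide] at hfij
      exact h4 (hfij.mp h1)
    · have h1 : (A i - B i) m = -‖A i - B i‖ := by linarith [ha'.1, ha'.2, hb'.1, hb'.2, hc'.1, hc'.2]
      have h2 : (B j - A j) m = -‖B j - A j‖ := by linarith [ha'.1, ha'.2, hb'.1, hb'.2, hc'.1, hc'.2]
      have h3 : (A j - B j) m = ‖A j - B j‖ := by
        have : (A j - B j) m = -((B j - A j) m) := by simp [Pi.sub_apply]
        rw [this, h2, norm_sub_rev (B j)]; ring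
      have h4 : (A i - B i) m ≠ ‖A i - B i‖ := by
        rw [h1]; have := hd i; intro hcon; linarith
      simp only [f, decide_eq_decide] at hfij
      exact h4 (hfij.mpr h3)
  calc k = Fintype.card (Fin k) := (Fintype.card_fin k).symm
    _ ≤ Fintype.card (Fin n → Bool) := Fintype.card_le_of_injective f hinj
    _ = 2 ^ n := by simp
end

section
/- Let n, k be positive integers and let A, B : Fin k → ℝ^n be points such that A(i) ≠ B(i) for every i, and for all i ≠ j: ‖A(i) − A(j)‖_1 = ‖A(i) − B(i)‖_1 + ‖B(i) − B(j)‖_1 + ‖B(j) − A(j)‖_1. Then k ≤ 2n. -/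
/-!
Pick for every `i` a coordinate `c` in which `A i` and `B i` differ, together with the sign of
`A i c - B i c`. In `ℓ¹` a geodesic chain is geodesic in every coordinate, and in the coordinate
`c` the chain `A i → B i → B j → A j` is monotone only if `A i c - B i c` and `A j c - B j c` have
opposite signs. Hence no two indices get the same coordinate and sign, so `k ≤ 2n`.
-/

theorem PiLp.norm_add₃_apply_eq_of_L1 {ι : Type*} {β : ι → Type*} [Fintype ι]
    [∀ i, SeminormedAddCommGroup (β i)] {x y z : PiLp 1 β}
    (h : ‖x + y + z‖ = ‖x‖ + ‖y‖ + ‖z‖) (i : ι) :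
    ‖x i + y i + z i‖ = ‖x i‖ + ‖y i‖ + ‖z i‖ := by
  simp only [norm_eq_of_L1, ← Finset.sum_add_distrib, WithLp.ofLp_add, Pi.add_apply] at h
  exact (Finset.sum_eq_sum_iff_of_le fun _ _ => norm_add₃_le).1 h i (Finset.mem_univ i)

theorem mul_nonneg_of_abs_add_add_eq {a b c : ℝ} (h : |a + b + c| = |a| + |b| + |c|) :
    0 ≤ a * c := by
  have hac : |a + c| = |a| + |c| := by
    have := abs_add_le (a + c) b
    rw [add_right_comm, h] at this
    exact le_antisymm (abs_add_le a c) (by linarith)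
  rcases (abs_add_eq_add_abs_iff a c).1 hac with ⟨ha, hc⟩ | ⟨ha, hc⟩
  · exact mul_nonneg ha hc
  · exact mul_nonneg_of_nonpos_of_nonpos ha hc

theorem Fintype.card_le_two_mul_card_of_pairwise_mul_nonpos {ι σ : Type*} [Fintype ι] [Fintype σ]
    (v : ι → σ → ℝ) (hv : ∀ i, v i ≠ 0) (h : Pairwise fun i j => ∀ c, v i c * v j c ≤ 0) :
    card ι ≤ 2 * card σ := by
  choose c hc using fun i => Function.ne_iff.1 (hv i)
  have hinj : Function.Injective fun i => (c i, decide (0 < v i (c i))) := by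
    intro i j hij
    by_contra hne
    simp only [Prod.mk.injEq, decide_eq_decide] at hij
    obtain ⟨hcij, hsign⟩ := hij
    rw [hcij] at hsign
    have hprod := h hne (c j)
    have hi : v i (c j) ≠ 0 := hcij ▸ hc i
    have hj : v j (c j) ≠ 0 := hc j
    rcases hi.lt_or_gt with hi | hi <;> rcases hj.lt_or_gt with hj | hj
    · nlinarith
    · exact absurd (hsign.2 hj) hi.not_gt
    · exact absurd (hsign.1 hi) hj.not_gt
    · nlinarith
  simpa [mul_comm] using card_le_of_injective _ hinj

theorem leaves_le_two_mul_l1_general (n k : ℕ)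
    (A B : Fin k → PiLp 1 (fun _ : Fin n => ℝ)) (hAB : ∀ i, A i ≠ B i)
    (hchain : ∀ i j : Fin k, i ≠ j →
      ‖A i - A j‖ = ‖A i - B i‖ + ‖B i - B j‖ + ‖B j - A j‖) :
    k ≤ 2 * n := by
  have hopp : Pairwise fun i j => ∀ c, (A i - B i) c * (A j - B j) c ≤ 0 := by
    intro i j hij c
    have hgeod : ‖(A i - B i) + (B i - B j) + (B j - A j)‖ =
        ‖A i - B i‖ + ‖B i - B j‖ + ‖B j - A j‖ := by
      rw [← hchain i j hij]
      abel_nf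
    have := mul_nonneg_of_abs_add_add_eq (PiLp.norm_add₃_apply_eq_of_L1 hgeod c)
    simp only [PiLp.sub_apply] at this ⊢
    nlinarith
  have hne : ∀ i, WithLp.ofLp (A i - B i) ≠ 0 := fun i h =>
    hAB i (sub_eq_zero.1 (WithLp.ofLp_injective 1 h))
  simpa using Fintype.card_le_two_mul_card_of_pairwise_mul_nonpos _ hne hopp

/-- If `A i, B i` in `(ℝ^n, d_1)` are images of the leaves of a tree and of their
adjacent vertices under an isometric embedding, i.e. `A i ≠ B i` and for `i ≠ j`
the chain `A i → B i → B j → A j` is geodesic, then `k ≤ 2n`. -/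
theorem leaves_le_two_mul_l1 (n k : ℕ) (hn : 0 < n) (hk : 0 < k)
    (A B : Fin k → PiLp 1 (fun _ : Fin n => ℝ)) (hAB : ∀ i, A i ≠ B i)
    (hchain : ∀ i j : Fin k, i ≠ j →
      ‖A i - A j‖ = ‖A i - B i‖ + ‖B i - B j‖ + ‖B j - A j‖) :
    k ≤ 2 * n :=
  leaves_le_two_mul_l1_general n k A B hAB hchain
end

section
/- Let G be a finite tree on a vertex set V with at least two vertices, with positive edge weights, and let d_T denote the associated tree metric on V. If there exists a map f : V → ℝ^n such that d_∞(f(u), f(v)) = d_T(u, v) for all u, v ∈ V, then the number of leaves of G is at most 2^n. (Equivalently, a finite metric tree with more than 2^n leaves cannot be embedded isometrically into (ℝ^n, d_∞).) -/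
/-- A finite metric tree with more than `2^n` leaves cannot be isometrically
embedded into `(ℝ^n, d_∞)`: if `G` is a finite tree (at least two vertices) with
positive edge weights `w`, `dT` is the associated tree metric (the weight of the
unique path between two vertices), and `f : V → ℝ^n` satisfies
`d_∞(f u, f v) = dT u v`, then the number of leaves of `G` is at most `2^n`. -/
theorem tree_leaves_le_pow_of_embed_linf (n : ℕ) (V : Type*) [Fintype V]
    [DecidableEq V] (G : SimpleGraph V) [DecidableRel G.Adj]
    (hG : G.IsTree) (hV : 1 < Fintype.card V)
    (w : Sym2 V → ℝ) (hw : ∀ e ∈ G.edgeSet, 0 < w e)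
    (dT : V → V → ℝ)
    (hdT : ∀ (u v : V) (p : G.Walk u v), p.IsPath → dT u v = (p.edges.map w).sum)
    (f : V → (Fin n → ℝ)) (hf : ∀ u v : V, dist (f u) (f v) = dT u v) :
    (Finset.univ.filter fun v : V => G.degree v = 1).card ≤ 2 ^ n := by
  classical
  have dT_eq : ∀ u v : V, dT u v = dist (f u) (f v) := fun u v => (hf u v).symm
  have dT_symm : ∀ u v : V, dT u v = dT v u := by
    intro u v; rw [dT_eq, dT_eq, dist_comm]
  have dT_self : ∀ u : V, dT u u = 0 := by
    intro u; rw [dT_eq, dist_self]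
  have edge_dT : ∀ u v : V, G.Adj u v → dT u v = w s(u, v) := by
    intro u v h
    have hp : (SimpleGraph.Walk.cons h SimpleGraph.Walk.nil).IsPath := by
      simp [h.ne]
    have := hdT u v _ hp
    simpa using this
  -- the case n = 0 is impossible
  rcases Nat.eq_zero_or_pos n with hn | hn
  · exfalso
    obtain ⟨u, v, huv⟩ := Fintype.exists_pair_of_one_lt_card hV
    obtain ⟨p⟩ := hG.isConnected.preconnected u v
    cases p with
    | nil => exact huv rfl
    | @cons _ x _ h q =>
      have hwe : 0 < w s(u, x) := hw _ (G.mem_edgeSet.mpr h)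
      have h0 : dT u x = 0 := by
        rw [dT_eq]
        subst hn
        have : f u = f x := funext fun i => i.elim0
        rw [this, dist_self]
      rw [edge_dT u x h] at h0
      linarith
  -- main case: `0 < n`
  have hnbr : ∀ u : V, G.degree u = 1 → ∃ x, G.Adj u x ∧ ∀ y, G.Adj u y → y = x := by
    intro u hu
    obtain ⟨a, ha⟩ := Finset.card_eq_one.mp hu
    refine ⟨a, ?_, ?_⟩
    · have : a ∈ G.neighborFinset u := by rw [ha]; exact Finset.mem_singleton_self a
      exact (SimpleGraph.mem_neighborFinset G u a).mp this
    · intro y hy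
      have : y ∈ G.neighborFinset u := (SimpleGraph.mem_neighborFinset G u y).mpr hy
      rw [ha] at this
      exact Finset.mem_singleton.mp this
  let nbr : V → V := fun u =>
    if h : ∃ x, G.Adj u x ∧ ∀ y, G.Adj u y → y = x then h.choose else u
  have nbr_adj : ∀ u : V, G.degree u = 1 → G.Adj u (nbr u) := by
    intro u hu
    have h := hnbr u hu
    simp only [nbr, dif_pos h]
    exact h.choose_spec.1
  have nbr_uniq : ∀ u : V, G.degree u = 1 → ∀ y, G.Adj u y → y = nbr u := by
    intro u hu y hy
    have h := hnbr u hu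
    simp only [nbr, dif_pos h]
    exact h.choose_spec.2 y hy
  have wpos : ∀ u : V, G.degree u = 1 → 0 < w s(u, nbr u) := by
    intro u hu
    exact hw _ (G.mem_edgeSet.mpr (nbr_adj u hu))
  have key : ∀ u v : V, G.degree u = 1 → u ≠ v →
      dT u v = w s(u, nbr u) + dT (nbr u) v := by
    intro u v hu hne
    obtain ⟨p⟩ := hG.isConnected.preconnected u v
    obtain ⟨q, hq⟩ := p.toPath
    cases q with
    | nil => exact absurd rfl hne
    | @cons _ x _ h q' =>
      have hx : x = nbr u := nbr_uniq u hu x h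
      have hq' : q'.IsPath := hq.of_cons
      have := hdT u v _ hq
      rw [this]
      simp only [SimpleGraph.Walk.edges_cons, List.map_cons, List.sum_cons]
      rw [← hdT x v q' hq', hx]
  have coord_le : ∀ (u v : V) (i : Fin n), |f u i - f v i| ≤ dT u v := by
    intro u v i
    rw [dT_eq]
    calc |f u i - f v i| = dist (f u i) (f v i) := (Real.dist_eq _ _).symm
      _ ≤ dist (f u) (f v) := dist_le_pi_dist _ _ i
  haveI : Nonempty (Fin n) := ⟨⟨0, hn⟩⟩
  have exists_coord : ∀ u v : V, ∃ i : Fin n, |f u i - f v i| = dT u v := by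
    intro u v
    obtain ⟨i, -, hi⟩ := Finset.exists_mem_eq_sup Finset.univ Finset.univ_nonempty
      (fun b => nndist (f u b) (f v b))
    refine ⟨i, ?_⟩
    rw [dT_eq, dist_pi_def, hi, coe_nndist, Real.dist_eq]
  have force_pos : ∀ u v : V, G.degree u = 1 → u ≠ v → ∀ i : Fin n,
      f u i - f v i = dT u v → 0 < f u i - f (nbr u) i := by
    intro u v hu hne i hi
    have h2 := coord_le (nbr u) v i
    have hk := key u v hu hne
    have hwp := wpos u hu
    rw [abs_le] at h2
    linarith [h2.2]
  have force_neg : ∀ u v : V, G.degree u = 1 → u ≠ v → ∀ i : Fin n,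
      f u i - f v i = -dT u v → f u i - f (nbr u) i < 0 := by
    intro u v hu hne i hi
    have h2 := coord_le (nbr u) v i
    have hk := key u v hu hne
    have hwp := wpos u hu
    rw [abs_le] at h2
    linarith [h2.1]
  have dT_nonneg : ∀ u v : V, 0 ≤ dT u v := by
    intro u v; rw [dT_eq]; exact dist_nonneg
  let Φ : V → (Fin n → Bool) := fun u i => decide (0 < f u i - f (nbr u) i)
  have hcard : (Finset.univ : Finset (Fin n → Bool)).card = 2 ^ n := by
    rw [Finset.card_univ]
    simp
  calc (Finset.univ.filter fun v : V => G.degree v = 1).card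
      ≤ (Finset.univ : Finset (Fin n → Bool)).card := by
        apply Finset.card_le_card_of_injOn Φ (fun x _ => Finset.mem_univ _)
        intro u hu v hv huv
        rw [Finset.mem_coe, Finset.mem_filter] at hu hv
        by_contra hne
        obtain ⟨i, hi⟩ := exists_coord u v
        have hΦ : Φ u i = Φ v i := congrFun huv i
        rcases (abs_eq (dT_nonneg u v)).mp hi with h | h
        · have hp := force_pos u v hu.2 hne i h
          have hq := force_neg v u hv.2 (Ne.symm hne) i (by rw [dT_symm v u]; linarith)
          simp only [Φ, decide_eq_decide] at hΦ
          exact absurd (hΦ.mp hp) (not_lt.mpr (le_of_lt hq))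
        · have hp := force_neg u v hu.2 hne i h
          have hq := force_pos v u hv.2 (Ne.symm hne) i (by rw [dT_symm v u]; linarith)
          simp only [Φ, decide_eq_decide] at hΦ
          exact absurd (hΦ.mpr hq) (not_lt.mpr (le_of_lt hp))
    _ = 2 ^ n := hcard
end

section
/- Let G be a finite tree on a vertex set V with at least two vertices, with positive edge weights, and let d_T denote the associated tree metric on V. If there exists a map f : V → ℝ^n such that d_1(f(u), f(v)) = d_T(u, v) for all u, v ∈ V, then the number of leaves of G is at most 2n. (Equivalently, a finite metric tree with more than 2n leaves cannot be embedded isometrically into (ℝ^n, d_1).) -/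
/-!
Let `ℓ` be a leaf with neighbour `u`. Every path from `ℓ` to another vertex `x` passes
through `u`, so `d(ℓ, x) = d(ℓ, u) + d(u, x)`; in `ℓ¹` such an equality holds in every
coordinate separately. Choosing a coordinate in which `f ℓ` and `f u` differ, `f ℓ` is then
the strict unique maximum or minimum of that coordinate over all vertices. Hence distinct
leaves claim distinct (coordinate, sign) pairs, of which there are `2n`.
-/

open SimpleGraph Finset

theorem Finset.card_le_card_of_forall_exists_strictMax {V κ α : Type*} [Fintype κ] [Preorder α]
    (s : Finset V) (g : V → κ → α) (h : ∀ ℓ ∈ s, ∃ k, ∀ x ≠ ℓ, g x k < g ℓ k) :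
    #s ≤ Fintype.card κ := by
  choose k hk using h
  have hk_inj : Function.Injective fun ℓ : s => k ℓ ℓ.2 := by
    rintro ⟨ℓ, hℓ⟩ ⟨ℓ', hℓ'⟩ hkk
    by_contra hne
    have h₁ := hk ℓ hℓ ℓ' fun h => hne (Subtype.ext h.symm)
    have h₂ := hk ℓ' hℓ' ℓ fun h => hne (Subtype.ext h)
    rw [← show k ℓ hℓ = k ℓ' hℓ' from hkk] at h₂
    exact lt_asymm h₁ h₂
  simpa using Fintype.card_le_of_injective _ hk_inj

theorem Real.lt_of_dist_eq_add {a b c : ℝ} (h : dist a c = dist a b + dist b c) (hba : b < a) :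
    c < a := by
  rw [Real.dist_eq, Real.dist_eq, Real.dist_eq] at h
  rcases abs_cases (a - c) with ⟨h₁, h₁'⟩ | ⟨h₁, h₁'⟩ <;>
    rcases abs_cases (a - b) with ⟨h₂, h₂'⟩ | ⟨h₂, h₂'⟩ <;>
      rcases abs_cases (b - c) with ⟨h₃, h₃'⟩ | ⟨h₃, h₃'⟩ <;> linarith

namespace PiLp

variable {ι : Type*} [Fintype ι]

theorem dist_eq_sum_of_L1 {β : ι → Type*} [∀ i, PseudoMetricSpace (β i)] (x y : PiLp 1 β) :
    dist x y = ∑ i, dist (x i) (y i) := by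
  simpa using dist_eq_sum (p := 1) (by norm_num) x y

theorem dist_apply_eq_add_of_L1 {β : ι → Type*} [∀ i, PseudoMetricSpace (β i)]
    {x y z : PiLp 1 β} (h : dist x z = dist x y + dist y z) (i : ι) :
    dist (x i) (z i) = dist (x i) (y i) + dist (y i) (z i) := by
  rw [dist_eq_sum_of_L1, dist_eq_sum_of_L1, dist_eq_sum_of_L1, ← sum_add_distrib] at h
  exact (sum_eq_sum_iff_of_le fun j _ => dist_triangle _ _ _).1 h i (mem_univ i)

/-- The index `ι ⊕ ι` runs over the coordinates and their negatives. -/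
theorem exists_lt_of_dist_eq_add_of_L1 {p q : PiLp 1 (fun _ : ι => ℝ)} (hpq : p ≠ q) :
    ∃ k : ι ⊕ ι, ∀ x : PiLp 1 (fun _ : ι => ℝ), dist p x = dist p q + dist q x →
      Sum.elim (⇑x) (-⇑x) k < Sum.elim (⇑p) (-⇑p) k := by
  obtain ⟨i, hi⟩ : ∃ i, p i ≠ q i := by
    by_contra! h
    exact hpq (PiLp.ext h)
  rcases hi.lt_or_gt with hlt | hgt
  · refine ⟨.inr i, fun x hx => ?_⟩
    have hx' := dist_apply_eq_add_of_L1 hx i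
    rw [← dist_neg_neg, ← dist_neg_neg (p i), ← dist_neg_neg (q i)] at hx'
    exact Real.lt_of_dist_eq_add hx' (neg_lt_neg hlt)
  · exact ⟨.inl i, fun x hx => Real.lt_of_dist_eq_add (dist_apply_eq_add_of_L1 hx i) hgt⟩

end PiLp

namespace SimpleGraph

variable {V : Type*} {G : SimpleGraph V} {w : Sym2 V → ℝ} {dT : V → V → ℝ}

theorem dist_eq_weight_of_adj
    (hdT : ∀ (u v : V) (p : G.Walk u v), p.IsPath → dT u v = (p.edges.map w).sum)
    {u v : V} (h : G.Adj u v) : dT u v = w s(u, v) := by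
  simpa using hdT u v (.cons h .nil) (by simp [h.ne])

theorem dist_leaf_eq_add
    (hdT : ∀ (u v : V) (p : G.Walk u v), p.IsPath → dT u v = (p.edges.map w).sum)
    (hG : G.Preconnected) {ℓ u x : V} (hℓ : ∀ v, G.Adj ℓ v → v = u) (hu : G.Adj ℓ u)
    (hx : x ≠ ℓ) : dT ℓ x = dT ℓ u + dT u x := by
  classical
  obtain ⟨p, hp⟩ := (hG ℓ x).some.toPath
  cases p with
  | nil => exact absurd rfl hx
  | cons h q =>
    obtain rfl := hℓ _ h
    rw [hdT _ _ _ hp, hdT _ _ q hp.of_cons, dist_eq_weight_of_adj hdT hu]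
    simp

end SimpleGraph

theorem tree_leaves_le_two_mul_of_embed_l1_general (n : ℕ) (V : Type*) [Fintype V]
    (G : SimpleGraph V) [DecidableRel G.Adj]
    (hG : G.IsTree)
    (w : Sym2 V → ℝ) (hw : ∀ e ∈ G.edgeSet, 0 < w e)
    (dT : V → V → ℝ)
    (hdT : ∀ (u v : V) (p : G.Walk u v), p.IsPath → dT u v = (p.edges.map w).sum)
    (f : V → PiLp 1 (fun _ : Fin n => ℝ)) (hf : ∀ u v : V, dist (f u) (f v) = dT u v) :
    (Finset.univ.filter fun v : V => G.degree v = 1).card ≤ 2 * n := by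
  refine (card_le_card_of_forall_exists_strictMax _
    (fun v => Sum.elim (⇑(f v)) (-⇑(f v))) fun ℓ hℓ => ?_).trans (by simp [two_mul])
  obtain ⟨u, hu, hℓ⟩ := degree_eq_one_iff_existsUnique_adj.mp (mem_filter.mp hℓ).2
  have hne : f ℓ ≠ f u := by
    rw [← dist_pos, hf, dist_eq_weight_of_adj hdT hu]
    exact hw _ hu
  obtain ⟨k, hk⟩ := PiLp.exists_lt_of_dist_eq_add_of_L1 hne
  refine ⟨k, fun x hx => hk _ ?_⟩
  simp only [hf]
  exact dist_leaf_eq_add hdT hG.connected.preconnected hℓ hu hx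

/-- A finite metric tree with more than `2n` leaves cannot be isometrically
embedded into `(ℝ^n, d_1)`: if `G` is a finite tree (at least two vertices) with
positive edge weights `w`, `dT` is the associated tree metric (the weight of the
unique path between two vertices), and `f : V → ℝ^n` satisfies
`d_1(f u, f v) = dT u v`, then the number of leaves of `G` is at most `2n`. -/
theorem tree_leaves_le_two_mul_of_embed_l1 (n : ℕ) (V : Type*) [Fintype V]
    [DecidableEq V] (G : SimpleGraph V) [DecidableRel G.Adj]
    (hG : G.IsTree) (hV : 1 < Fintype.card V)
    (w : Sym2 V → ℝ) (hw : ∀ e ∈ G.edgeSet, 0 < w e)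
    (dT : V → V → ℝ)
    (hdT : ∀ (u v : V) (p : G.Walk u v), p.IsPath → dT u v = (p.edges.map w).sum)
    (f : V → PiLp 1 (fun _ : Fin n => ℝ)) (hf : ∀ u v : V, dist (f u) (f v) = dT u v) :
    (Finset.univ.filter fun v : V => G.degree v = 1).card ≤ 2 * n :=
  tree_leaves_le_two_mul_of_embed_l1_general n V G hG w hw dT hdT f hf
end

section
/- Let n be a positive integer and let G be a finite tree on a vertex set V with positive edge weights whose number of leaves is at most 2n, and let d_T denote the associated tree metric on V. Then there exists a map f : V → ℝ^n such that d_1(f(u), f(v)) = d_T(u, v) for all u, v ∈ V. (That is, a finite metric tree with at most 2n leaves can be embedded isometrically into (ℝ^n, d_1).) -/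
/-!
A tree metric is the cut metric `d(u, v) = ∑ₑ w(e) [e separates u and v]`. The cuts of the
edges on the path between two vertices `a` and `b` are nested, so the part of `d` carried by that
path is a line metric `|φ u - φ v|`, which costs one coordinate of `ℓ₁`. Keep a set `T` of
vertices, initially the leaves, such that every edge still carrying weight separates two points
of `T`. After the weight of the path between two points `a, b ∈ T` has been spent, `b` is no
longer needed in `T`, and if `|T|` is even the pair can be chosen so that neither `a` nor `b` is
needed. So each coordinate turns the bound `|T| ≤ 2n` into `|T| ≤ 2(n - 1)`.
-/

open Finset

lemma Finset.abs_sum_eq_sum_abs {ι : Type*} {s : Finset ι} {f : ι → ℝ}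
    (h : ∀ i ∈ s, ∀ j ∈ s, 0 < f i → 0 ≤ f j) :
    |∑ i ∈ s, f i| = ∑ i ∈ s, |f i| := by
  by_cases hpos : ∃ i ∈ s, 0 < f i
  · obtain ⟨i, hi, hfi⟩ := hpos
    have hnonneg := fun j hj => h i hi j hj hfi
    rw [abs_sum_of_nonneg hnonneg]
    exact sum_congr rfl fun j hj => (abs_of_nonneg (hnonneg j hj)).symm
  · push Not at hpos
    rw [← abs_neg, ← sum_neg_distrib, abs_sum_of_nonneg fun j hj => neg_nonneg.mpr (hpos j hj)]
    exact sum_congr rfl fun j hj => (abs_of_nonpos (hpos j hj)).symm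

section

variable {V : Type*}

def EmbedsInL1 (n : ℕ) (d : V → V → ℝ) : Prop :=
  ∃ f : V → PiLp 1 (fun _ : Fin n => ℝ), ∀ u v, dist (f u) (f v) = d u v

lemma embedsInL1_zero (n : ℕ) : EmbedsInL1 n fun _ _ : V => (0 : ℝ) :=
  ⟨0, fun _ _ => dist_self _⟩

lemma EmbedsInL1.cons {n : ℕ} {d : V → V → ℝ} (hd : EmbedsInL1 n d) (φ : V → ℝ) :
    EmbedsInL1 (n + 1) fun u v => |φ u - φ v| + d u v := by
  obtain ⟨f, hf⟩ := hd
  refine ⟨fun v => WithLp.toLp 1 (Fin.cons (φ v) (f v).ofLp), fun u v => ?_⟩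
  simp [PiLp.dist_eq_of_L1, Fin.sum_univ_succ, ← hf, Real.dist_eq]

end

namespace SimpleGraph

variable {V : Type*} {G : SimpleGraph V} {e e' : Sym2 V} {a b c d u v x y z z' : V}

def SameSide (G : SimpleGraph V) (e : Sym2 V) (u v : V) : Prop :=
  (G.deleteEdges {e}).Reachable u v

namespace SameSide

protected lemma rfl : G.SameSide e u u := Reachable.rfl

protected lemma symm (h : G.SameSide e u v) : G.SameSide e v u := Reachable.symm h

protected lemma trans (h : G.SameSide e u v) (h' : G.SameSide e v z) :
    G.SameSide e u z :=
  Reachable.trans h h'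

lemma of_adj (h : G.Adj x y) (hne : s(x, y) ≠ e) : G.SameSide e x y :=
  (deleteEdges_adj.mpr ⟨h, hne⟩).reachable

/-- A walk avoiding the side of `x` cannot use an edge at `x`. -/
lemma sameSide_mk_of_not_sameSide (h : G.SameSide e z z') (hx : ¬ G.SameSide e z x) :
    G.SameSide s(x, y) z z' := by
  obtain ⟨p⟩ := h
  have hp : ∀ f ∈ p.edges, f ∉ ({s(x, y)} : Set (Sym2 V)) := by
    rintro f hf rfl
    classical
    exact hx ⟨p.takeUntil x (p.fst_mem_support_of_mem_edges hf)⟩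
  exact ⟨(p.toDeleteEdges _ hp).mapLe (deleteEdges_mono (deleteEdges_le _))⟩

end SameSide

/-- `e` separates `{a, b}` from `{c, d}`, so `e'` cannot separate both pairs. -/
theorem sameSide_laminar (h₁ : G.SameSide e a b) (h₁' : G.SameSide e c d)
    (h₁'' : ¬ G.SameSide e a c) (h₂ : ¬ G.SameSide e' a b) : G.SameSide e' c d := by
  induction e' using Sym2.ind with | h x y => ?_
  by_cases hcx : G.SameSide e c x
  · exact absurd (h₁.sameSide_mk_of_not_sameSide fun hax => h₁'' (hax.trans hcx.symm)) h₂
  · exact h₁'.sameSide_mk_of_not_sameSide hcx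

lemma sameSide_or_sameSide (hG : G.Preconnected) (x y v : V) :
    G.SameSide s(x, y) v x ∨ G.SameSide s(x, y) v y := by
  suffices ∀ {u z} (p : G.Walk u z), G.SameSide s(x, y) z x ∨ G.SameSide s(x, y) z y →
      G.SameSide s(x, y) u x ∨ G.SameSide s(x, y) u y from
    this (hG v x).some (Or.inl .rfl)
  intro u z p
  induction p with
  | nil => exact id
  | @cons a b _ hab _ ih =>
    intro hz
    by_cases he : s(a, b) = s(x, y)
    · rcases Sym2.eq_iff.mp he with ⟨rfl, -⟩ | ⟨rfl, -⟩
      · exact Or.inl .rfl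
      · exact Or.inr .rfl
    · exact (ih hz).imp (SameSide.of_adj hab he).trans (SameSide.of_adj hab he).trans

lemma sameSide_of_not_sameSide_of_not_sameSide (hG : G.Preconnected)
    (hu : ¬ G.SameSide e u z) (hv : ¬ G.SameSide e v z) : G.SameSide e u v := by
  induction e using Sym2.ind with | h x y => ?_
  rcases sameSide_or_sameSide hG x y u with hu' | hu' <;>
  rcases sameSide_or_sameSide hG x y v with hv' | hv' <;>
  rcases sameSide_or_sameSide hG x y z with hz' | hz'
  all_goals first
    | exact hu'.trans hv'.symm
    | exact absurd (hu'.trans hz'.symm) hu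
    | exact absurd (hv'.trans hz'.symm) hv

lemma sameSide_iff_sameSide_iff (hG : G.Preconnected) (a : V) :
    G.SameSide e u v ↔ (G.SameSide e a u ↔ G.SameSide e a v) := by
  refine ⟨fun h => ⟨(·.trans h), (·.trans h.symm)⟩, fun h => ?_⟩
  by_cases hau : G.SameSide e a u
  · exact hau.symm.trans (h.mp hau)
  · exact sameSide_of_not_sameSide_of_not_sameSide hG (hau ∘ .symm) (mt h.mpr hau ∘ .symm)

lemma IsAcyclic.mem_edges_iff_not_sameSide (hG : G.IsAcyclic) {p : G.Walk u v} (hp : p.IsPath) :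
    e ∈ p.edges ↔ ¬ G.SameSide e u v := by
  classical
  refine ⟨fun he => ?_, p.mem_edges_of_not_reachable_deleteEdges⟩
  induction e using Sym2.ind with | h x y => ?_
  rintro hsame
  obtain ⟨q, hq⟩ := reachable_deleteEdges_iff_exists_walk.mp hsame
  have : p = q.bypass := congrArg Subtype.val
    ((hG.subsingleton_path u v).elim ⟨p, hp⟩ ⟨q.bypass, q.bypass_isPath⟩)
  exact hq (q.edges_bypass_subset_edges (this ▸ he))

section cutDist

variable [Fintype V] {w w₁ w₂ : Sym2 V → ℝ}

noncomputable def cutDist (G : SimpleGraph V) (w : Sym2 V → ℝ) (u v : V) : ℝ :=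
  ∑ e, {e | ¬ G.SameSide e u v}.indicator w e

lemma cutDist_add : G.cutDist (w₁ + w₂) u v = G.cutDist w₁ u v + G.cutDist w₂ u v := by
  simp only [cutDist, Set.indicator_add', Pi.add_apply, sum_add_distrib]

lemma IsAcyclic.sum_map_edges_eq_cutDist (hG : G.IsAcyclic) {p : G.Walk u v} (hp : p.IsPath)
    (w : Sym2 V → ℝ) : (p.edges.map w).sum = G.cutDist w u v := by
  classical
  have hcut : {e | ¬ G.SameSide e u v} = ↑p.edges.toFinset := by
    ext e
    simp [hG.mem_edges_iff_not_sameSide hp]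
  rw [← List.sum_toFinset w hp.isTrail.edges_nodup, cutDist, hcut,
    sum_indicator_subset _ (subset_univ _)]

/-- The edges separating `a` from `b` cut out nested sets around `a`, so all terms of
`cutDist w a u - cutDist w a v` have the same sign. -/
lemma cutDist_eq_abs_sub (hG : G.Preconnected) (hw : ∀ e, 0 ≤ w e)
    (hwab : ∀ e, w e ≠ 0 → ¬ G.SameSide e a b) (u v : V) :
    G.cutDist w u v = |G.cutDist w a u - G.cutDist w a v| := by
  classical
  set g : V → V → Sym2 V → ℝ := fun x y e =>
    {e | ¬ G.SameSide e a x}.indicator w e - {e | ¬ G.SameSide e a y}.indicator w e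
  have hsub : G.cutDist w a u - G.cutDist w a v = ∑ e, g u v e := by
    simp only [cutDist, g, sum_sub_distrib]
  have habs : G.cutDist w u v = ∑ e, |g u v e| := by
    refine sum_congr rfl fun e _ => ?_
    simp only [g, Set.indicator_apply, Set.mem_ofPred_eq,
      sameSide_iff_sameSide_iff hG a (u := u) (v := v)]
    split_ifs <;> simp_all [abs_of_nonneg]
  have hpos : ∀ {x y} e, 0 < g x y e →
      ¬ G.SameSide e a x ∧ G.SameSide e a y ∧ w e ≠ 0 := by
    intro x y e h
    simp only [g, Set.indicator_apply, Set.mem_ofPred_eq] at h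
    split_ifs at h <;> simp only [sub_self, sub_zero, zero_sub, lt_self_iff_false, neg_pos] at h
    exacts [absurd h (hw e).not_gt, ⟨‹_›, ‹_›, h.ne'⟩]
  rw [hsub, habs, Finset.abs_sum_eq_sum_abs]
  intro e _ e' _ hge
  by_contra! hge'
  obtain ⟨hau, hav, hwe⟩ := hpos e hge
  obtain ⟨hav', hau', hwe'⟩ := hpos (x := v) (y := u) e' (by simpa [g] using hge')
  have hub : G.SameSide e u b :=
    sameSide_of_not_sameSide_of_not_sameSide hG (hau ∘ .symm) (hwab e hwe ∘ .symm)
  exact hwab e' hwe' (hau'.trans (sameSide_laminar hav hub hau hav'))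

end cutDist

section spanning

variable {w : Sym2 V → ℝ} {T : Finset V}

/-- Every edge of positive weight lies on the path between two points of `T`. -/
def SpansSupport (G : SimpleGraph V) (T : Finset V) (w : Sym2 V → ℝ) : Prop :=
  ∀ e, 0 < w e → ∃ s ∈ T, ∃ t ∈ T, ¬ G.SameSide e s t

lemma SpansSupport.cutDist_eq_zero [Fintype V] (h : G.SpansSupport T w) (hw : ∀ e, 0 ≤ w e)
    (hT : #T ≤ 1) : G.cutDist w = fun _ _ => 0 := by
  obtain rfl : w = 0 := funext fun e => ((hw e).eq_of_not_lt fun he => by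
    obtain ⟨s, hs, t, ht, hst⟩ := h e he
    exact hst (card_le_one.mp hT s hs t ht ▸ .rfl)).symm
  ext u v
  simp [cutDist]

lemma sameSide_and_pos_of_indicator_pos {e : Sym2 V}
    (h : 0 < {e | G.SameSide e a b}.indicator w e) :
    G.SameSide e a b ∧ 0 < w e := by
  have hab : e ∈ {e | G.SameSide e a b} := Set.mem_of_indicator_ne_zero h.ne'
  exact ⟨hab, by rwa [Set.indicator_of_mem hab] at h⟩

variable [DecidableEq V]

lemma SpansSupport.erase (h : G.SpansSupport T w) (ha : a ∈ T.erase b) :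
    G.SpansSupport (T.erase b) ({e | G.SameSide e a b}.indicator w) := by
  intro e he
  obtain ⟨hab, he⟩ := sameSide_and_pos_of_indicator_pos he
  obtain ⟨s, hs, t, ht, hst⟩ := h e he
  have hmove : ∀ x ∈ T, ∃ y ∈ T.erase b, G.SameSide e x y := fun x hx =>
    if hxb : x = b then ⟨a, ha, hxb ▸ hab.symm⟩
    else ⟨x, mem_erase.mpr ⟨hxb, hx⟩, .rfl⟩
  obtain ⟨s', hs', hss'⟩ := hmove s hs
  obtain ⟨t', ht', htt'⟩ := hmove t ht
  exact ⟨s', hs', t', ht', fun h => hst (hss'.trans (h.trans htt'.symm))⟩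

lemma SpansSupport.exists_split (h : G.SpansSupport T w)
    (hbad : ¬ G.SpansSupport ((T.erase a).erase b) ({e | G.SameSide e a b}.indicator w)) :
    ∃ e, G.SameSide e a b ∧ ((T.erase a).erase b).Nonempty ∧
      ∀ t ∈ (T.erase a).erase b, ¬ G.SameSide e a t := by
  simp only [SpansSupport, not_forall, not_exists, not_and, not_not] at hbad
  obtain ⟨e, he, hC⟩ := hbad
  obtain ⟨hab, he⟩ := sameSide_and_pos_of_indicator_pos he
  obtain ⟨s, hs, t, ht, hst⟩ := h e he
  obtain ⟨c, hc, hac⟩ : ∃ c ∈ T, ¬ G.SameSide e a c := by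
    by_contra! hall
    exact hst ((hall s hs).symm.trans (hall t ht))
  have hcC : c ∈ (T.erase a).erase b :=
    mem_erase.mpr ⟨fun h => hac (h ▸ hab), mem_erase.mpr ⟨fun h => hac (h ▸ .rfl), hc⟩⟩
  exact ⟨e, hab, ⟨c, hcC⟩, fun t ht hat => hac (hat.trans (hC t ht c hcC))⟩

/-- If the pair `a, b` fails, some edge `e₁` splits `T` into `{a, b}` and the rest. Then `a`
with any third point `c` works: otherwise some `e₂` splits `T` into `{a, c}` and the rest, and
these two splits cross. -/
lemma SpansSupport.exists_pair (h : G.SpansSupport T w) (hG : G.Preconnected)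
    (hT : #T = 2 ∨ 4 ≤ #T) : ∃ a ∈ T, ∃ b ∈ T.erase a,
      G.SpansSupport ((T.erase a).erase b) ({e | G.SameSide e a b}.indicator w) := by
  obtain ⟨a, ha, b, hb, hab⟩ := one_lt_card.mp (by omega : 1 < #T)
  have hb : b ∈ T.erase a := mem_erase.mpr ⟨Ne.symm hab, hb⟩
  by_contra! hno
  obtain ⟨e₁, hab₁, ⟨c₀, hc₀⟩, hC₁⟩ := h.exists_split (hno a ha b hb)
  have hcard : #((T.erase a).erase b) = #T - 2 := by
    rw [card_erase_of_mem hb, card_erase_of_mem ha]; omega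
  obtain ⟨c, hc, d, hd, hcd⟩ :=
    one_lt_card.mp (by have := card_pos.mpr ⟨c₀, hc₀⟩; omega : 1 < #((T.erase a).erase b))
  have hcT : c ∈ T.erase a := mem_of_mem_erase hc
  obtain ⟨e₂, hac₂, -, hC₂⟩ := h.exists_split (hno a ha c hcT)
  have hcd₁ : G.SameSide e₁ c d :=
    sameSide_of_not_sameSide_of_not_sameSide hG (hC₁ c hc ∘ .symm) (hC₁ d hd ∘ .symm)
  have hbC₂ : b ∈ (T.erase a).erase c := by grind
  have hdC₂ : d ∈ (T.erase a).erase c := by grind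
  exact hC₂ d hdC₂ (hac₂.trans (sameSide_laminar hab₁ hcd₁ (hC₁ c hc) (hC₂ b hbC₂)))

lemma SpansSupport.exists_pair_card_le (h : G.SpansSupport T w) (hG : G.Preconnected) {m : ℕ}
    (h2 : 2 ≤ #T) (hT : #T ≤ 2 * m + 2) : ∃ a b, ∃ T' : Finset V, #T' ≤ 2 * m ∧
      G.SpansSupport T' ({e | G.SameSide e a b}.indicator w) := by
  by_cases hodd : #T ≤ 2 * m + 1
  · obtain ⟨b, hb, a, ha, hab⟩ := one_lt_card.mp (by omega : 1 < #T)
    refine ⟨a, b, T.erase b, ?_, h.erase (mem_erase.mpr ⟨hab.symm, ha⟩)⟩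
    rw [card_erase_of_mem hb]; omega
  · obtain ⟨a, ha, b, hb, hspan⟩ := h.exists_pair hG (by omega)
    refine ⟨a, b, _, ?_, hspan⟩
    rw [card_erase_of_mem hb, card_erase_of_mem ha]; omega

theorem SpansSupport.embedsInL1_cutDist [Fintype V] (hG : G.Preconnected) {n : ℕ}
    (h : G.SpansSupport T w) (hw : ∀ e, 0 ≤ w e) (hT : #T ≤ 2 * n) :
    EmbedsInL1 n (G.cutDist w) := by
  induction n generalizing w T with
  | zero => exact h.cutDist_eq_zero hw (by omega) ▸ embedsInL1_zero 0
  | succ m ih =>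
    by_cases h1 : #T ≤ 1
    · exact h.cutDist_eq_zero hw h1 ▸ embedsInL1_zero _
    obtain ⟨a, b, T', hT', hspan⟩ := h.exists_pair_card_le hG (by omega) hT
    have hline := (ih hspan (fun _ => Set.indicator_nonneg (fun e _ => hw e) _) hT').cons
      (G.cutDist ({e | G.SameSide e a b}ᶜ.indicator w) a)
    convert hline using 3 with u v
    rw [← cutDist_eq_abs_sub hG (fun _ => Set.indicator_nonneg (fun e _ => hw e) _)
      (fun e he => Set.mem_of_indicator_ne_zero he), ← cutDist_add,
      Set.indicator_compl_add_self]

end spanning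

lemma IsAcyclic.exists_degree_eq_one_sameSide [Fintype V] [DecidableRel G.Adj]
    (hG : G.IsAcyclic) (hxy : G.Adj x y) : ∃ l, G.degree l = 1 ∧ G.SameSide s(x, y) x l := by
  -- a longest path starting with the edge `y x` ends at a leaf
  set S := {k | ∃ (l : V) (q : G.Walk x l), (q.cons hxy.symm).IsPath ∧ q.length = k}
  have hbdd : BddAbove S := ⟨Fintype.card V, fun k ⟨l, q, hq, hk⟩ => by
    have := hq.length_lt
    simp only [Walk.length_cons] at this
    omega⟩
  obtain ⟨l, q, hq, hlen⟩ : sSup S ∈ S :=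
    Nat.sSup_mem ⟨0, x, .nil, by simp [hxy.ne.symm], rfl⟩ hbdd
  have hmax : ∀ (l' : V) (q' : G.Walk x l'), (q'.cons hxy.symm).IsPath →
      q'.length ≤ q.length :=
    fun l' q' hq' => hlen ▸ le_csSup hbdd ⟨l', q', hq', rfl⟩
  have hy : y ∉ q.support := ((Walk.cons_isPath_iff _ _).mp hq).2
  refine ⟨l, degree_eq_one_iff_existsUnique_adj.mpr ⟨_,
    ((q.cons hxy.symm).adj_penultimate Walk.not_nil_cons).symm, fun r hr => ?_⟩,
    reachable_deleteEdges_iff_exists_walk.mpr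
      ⟨q, fun h => hy (q.snd_mem_support_of_mem_edges h)⟩⟩
  refine hG.eq_penultimate_of_adj_end hq hr (by_contra fun hr' => ?_)
  have := hmax r (q.concat hr) (hq.concat hr' hr)
  simp at this

lemma IsAcyclic.spansSupport_leaves [Fintype V] [DecidableRel G.Adj] {w : Sym2 V → ℝ}
    (hG : G.IsAcyclic) (hw : ∀ e, 0 < w e → e ∈ G.edgeSet) :
    G.SpansSupport (univ.filter fun v => G.degree v = 1) w := by
  intro e he
  induction e using Sym2.ind with | h x y => ?_
  have hxy : G.Adj x y := hw _ he
  obtain ⟨l, hl, hxl⟩ := hG.exists_degree_eq_one_sameSide hxy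
  obtain ⟨l', hl', hyl'⟩ := hG.exists_degree_eq_one_sameSide hxy.symm
  rw [Sym2.eq_swap] at hyl'
  refine ⟨l, by simpa using hl, l', by simpa using hl', fun h => ?_⟩
  exact isAcyclic_iff_forall_adj_isBridge.mp hG hxy (hxl.trans (h.trans hyl'.symm))

end SimpleGraph

theorem tree_embeds_into_l1_general (n : ℕ) (V : Type*) [Fintype V]
    [DecidableEq V] (G : SimpleGraph V) [DecidableRel G.Adj]
    (hG : G.IsTree)
    (w : Sym2 V → ℝ) (hw : ∀ e ∈ G.edgeSet, 0 < w e)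
    (dT : V → V → ℝ)
    (hdT : ∀ (u v : V) (p : G.Walk u v), p.IsPath → dT u v = (p.edges.map w).sum)
    (hleaves : (Finset.univ.filter fun v : V => G.degree v = 1).card ≤ 2 * n) :
    ∃ f : V → PiLp 1 (fun _ : Fin n => ℝ),
      ∀ u v : V, dist (f u) (f v) = dT u v := by
  set w' := G.edgeSet.indicator w
  have hw' : ∀ e, 0 ≤ w' e := Set.indicator_nonneg fun e he => (hw e he).le
  have hdist : dT = G.cutDist w' := by
    ext u v
    obtain ⟨p, hp⟩ := hG.connected.exists_isPath u v
    rw [hdT u v p hp, ← hG.isAcyclic.sum_map_edges_eq_cutDist hp]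
    exact congrArg List.sum (List.map_congr_left fun e he =>
      (Set.indicator_of_mem (p.edges_subset_edgeSet he) w).symm)
  have hspan := hG.isAcyclic.spansSupport_leaves (w := w') fun e he =>
    Set.mem_of_indicator_ne_zero he.ne'
  exact hdist ▸ hspan.embedsInL1_cutDist hG.connected.preconnected hw' hleaves

/-- A finite metric tree with at most `2n` leaves embeds isometrically into
`(ℝ^n, d_1)`: if `G` is a finite tree with positive edge weights `w`, `dT` is the
associated tree metric (the weight of the unique path between two vertices), and
`G` has at most `2n` leaves, then there is `f : V → ℝ^n` with
`d_1(f u, f v) = dT u v` for all `u, v`. -/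
theorem tree_embeds_into_l1 (n : ℕ) (hn : 0 < n) (V : Type*) [Fintype V]
    [DecidableEq V] (G : SimpleGraph V) [DecidableRel G.Adj]
    (hG : G.IsTree)
    (w : Sym2 V → ℝ) (hw : ∀ e ∈ G.edgeSet, 0 < w e)
    (dT : V → V → ℝ)
    (hdT : ∀ (u v : V) (p : G.Walk u v), p.IsPath → dT u v = (p.edges.map w).sum)
    (hleaves : (Finset.univ.filter fun v : V => G.degree v = 1).card ≤ 2 * n) :
    ∃ f : V → PiLp 1 (fun _ : Fin n => ℝ),
      ∀ u v : V, dist (f u) (f v) = dT u v :=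
  tree_embeds_into_l1_general n V G hG w hw dT hdT hleaves
end
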